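/- Every permutation π can be transformed into the identity permutation by a sequence of at most ⌊3(b(π)−1)/2⌋ operations, each a prefix reversal or a prefix transposition; that is, d_RT(π) ≤ ⌊3(b(π)−1)/2⌋. (Together with the lower bound d_RT(π) ≥ ⌊b(π)/2⌋ this shows that the algorithm SortByRT3 is a 3-approximation.) -/

import Mathlib

/-- A permutation on `n` elements: a list `[π₀, π₁, …, π_{n+1}]` of distinct
naturals that is a rearrangement of `0, 1, …, n+1` with `π₀ = 0` and
`π_{n+1} = n+1`. -/
def IsPerm (n : ℕ) (π : List ℕ) : Prop :=
  π.Perm (List.range (n + 2)) ∧ π.getD 0 0 = 0 ∧ π.getD (n + 1) 0 = n + 1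

/-- Breakpoint count `b(π)`: `1` plus the number of indices `i` with
`2 ≤ i ≤ n+1` and `|π_i − π_{i−1}| ≠ 1` (these are exactly the consecutive
pairs of the tail `π₁, …, π_{n+1}`). -/
def bp (π : List ℕ) : ℕ :=
  1 + ((π.drop 1).zip (π.drop 2)).countP
        (fun p => !(p.1 + 1 == p.2 || p.2 + 1 == p.1))

/-- Redefined breakpoint count `b′(π)`: the number of indices `i` with
`1 ≤ i ≤ n+1` and `|π_i − π_{i−1}| ≠ 1`. -/
def bp' (π : List ℕ) : ℕ :=
  (π.zip (π.drop 1)).countP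
    (fun p => !(p.1 + 1 == p.2 || p.2 + 1 == p.1))

/-- Prefix reversal `β(1,j)`: `[π₀, π_{j−1}, …, π₁, π_j, …, π_{n+1}]`. -/
def prefixReversal (π : List ℕ) (j : ℕ) : List ℕ :=
  π.take 1 ++ ((π.drop 1).take (j - 1)).reverse ++ π.drop j

/-- Prefix transposition `τ(1,j,k)`:
`[π₀, π_j, …, π_{k−1}, π₁, …, π_{j−1}, π_k, …, π_{n+1}]`. -/
def prefixTransposition (π : List ℕ) (j k : ℕ) : List ℕ :=
  π.take 1 ++ (π.drop j).take (k - j) ++ (π.drop 1).take (j - 1) ++ π.drop k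

/-- Prefix transreversal `βτ(1,j,k)`:
`[π₀, π_j, …, π_{k−1}, π_{j−1}, …, π₁, π_k, …, π_{n+1}]`. -/
def prefixTransreversal (π : List ℕ) (j k : ℕ) : List ℕ :=
  π.take 1 ++ (π.drop j).take (k - j) ++ ((π.drop 1).take (j - 1)).reverse ++ π.drop k

/-- A prefix operation: a prefix reversal, a prefix transposition, or a
prefix transreversal. -/
inductive PrefOp
  | rev (j : ℕ)
  | trans (j k : ℕ)
  | transrev (j k : ℕ)

/-- Apply a prefix operation to a permutation. -/
def PrefOp.apply (π : List ℕ) : PrefOp → List ℕ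
  | .rev j => prefixReversal π j
  | .trans j k => prefixTransposition π j k
  | .transrev j k => prefixTransreversal π j k

/-- Validity of a prefix operation on a permutation of `n` elements:
`3 ≤ j ≤ n+1` for a prefix reversal, `2 ≤ j < k ≤ n+1` for a prefix
transposition or a prefix transreversal. -/
def PrefOp.Valid (n : ℕ) : PrefOp → Prop
  | .rev j => 3 ≤ j ∧ j ≤ n + 1
  | .trans j k => 2 ≤ j ∧ j < k ∧ k ≤ n + 1
  | .transrev j k => 2 ≤ j ∧ j < k ∧ k ≤ n + 1

/-- Is the operation a prefix reversal? -/
def PrefOp.isRev : PrefOp → Bool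
  | .rev _ => true
  | _ => false

/-- Is the operation a prefix transreversal? -/
def PrefOp.isTransrev : PrefOp → Bool
  | .transrev _ _ => true
  | _ => false

/-- Apply a sequence of prefix operations, left to right. -/
def applySeq : List ℕ → List PrefOp → List ℕ
  | π, [] => π
  | π, o :: os => applySeq (o.apply π) os

/-- All operations in the sequence are valid for permutations of `n` elements. -/
def ValidSeq (n : ℕ) (ops : List PrefOp) : Prop :=
  ∀ o ∈ ops, o.Valid n

/-- `fm π` is `m(π) + 1`, where `m(π)` is the largest index `m` such that
`π_i = i` for all `0 ≤ i ≤ m`; i.e. the length of the longest already-sorted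
prefix of `π`. -/
def fm (π : List ℕ) : ℕ :=
  ((List.range π.length).takeWhile (fun i => π.getD i 0 == i)).length

/-- Forward-march prefix reversal: reverses the segment
`π_{m(π)+1}, …, π_{j−1}` in place. -/
def fmPrefixReversal (π : List ℕ) (j : ℕ) : List ℕ :=
  π.take (fm π) ++ ((π.drop (fm π)).take (j - fm π)).reverse ++ π.drop j

/-- Forward-march prefix transposition: cuts the segment
`π_{m(π)+1}, …, π_{j−1}` and pastes it between `π_{k−1}` and `π_k`. -/
def fmPrefixTransposition (π : List ℕ) (j k : ℕ) : List ℕ :=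
  π.take (fm π) ++ (π.drop j).take (k - j) ++
    (π.drop (fm π)).take (j - fm π) ++ π.drop k

/-- A forward-march operation: an FM prefix reversal or an FM prefix
transposition. -/
inductive FMOp
  | rev (j : ℕ)
  | trans (j k : ℕ)

/-- Apply a forward-march operation. -/
def FMOp.apply (π : List ℕ) : FMOp → List ℕ
  | .rev j => fmPrefixReversal π j
  | .trans j k => fmPrefixTransposition π j k

/-- Validity of a forward-march operation on a permutation `π` of `n`
elements: `m(π)+3 ≤ j ≤ n+1` for an FM prefix reversal, and
`m(π)+2 ≤ j ≤ n`, `j < k ≤ n+1` for an FM prefix transposition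
(recall `fm π = m(π) + 1`). -/
def FMOp.Valid (n : ℕ) (π : List ℕ) : FMOp → Prop
  | .rev j => fm π + 2 ≤ j ∧ j ≤ n + 1
  | .trans j k => fm π + 1 ≤ j ∧ j ≤ n ∧ j < k ∧ k ≤ n + 1

/-- Is the forward-march operation an FM prefix reversal? -/
def FMOp.isRev : FMOp → Bool
  | .rev _ => true
  | _ => false

/-- Apply a sequence of forward-march operations, left to right. -/
def applyFMSeq : List ℕ → List FMOp → List ℕ
  | π, [] => π
  | π, o :: os => applyFMSeq (o.apply π) os

/-- Validity of a sequence of forward-march operations, where each operation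
must be valid for the permutation obtained after applying the previous ones. -/
def FMValidSeq (n : ℕ) : List ℕ → List FMOp → Prop
  | _, [] => True
  | π, o :: os => o.Valid n π ∧ FMValidSeq n (o.apply π) os

/-!
Write `π = 0 :: t`. Then `b(π) - 1 = bp' t` counts the breakpoints inside `t`, and the prefix
operations reverse a prefix of `t` or swap two adjacent blocks at its front.

If `t` starts with `x ≥ 2`, one of `x ± 1`, say `y`, sits at a position `p ≥ 2`. If `t[p-1] t[p]`
is a breakpoint, reversing `t[0..p)` removes it. Otherwise `t[p-1]` and `x` are the two
neighbours of `y`, so `t[p] t[p+1]` is a breakpoint; and since a breakpoint-free stretch is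
monotone, `t[0..p]`, which runs from `x` to `y`, has a breakpoint `t[a-1] t[a]` with `a ≤ p`.
Moving `t[a..p]` to the front then removes a breakpoint.

If `t` starts with `1, …, m` and `m + 1` sits at position `r`, moving `t[m..r)` to the front
removes a breakpoint unless `t[r-1] = m + 2`. In that case reversing `t[0..r]` and then the
prefix ending in `t[m]` removes one breakpoint and leaves `t[m] ≥ 2` in front, so a third
operation removes another. Hence two breakpoints never cost more than three operations.
-/

namespace List

variable {α : Type*} {l : List α} {a i : ℕ} {d : α}

theorem getD_take (h : i < a) : (l.take a).getD i d = l.getD i d := by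
  simp [getD_eq_getElem?_getD, h]

theorem getD_drop : (l.drop a).getD i d = l.getD (a + i) d := by
  simp [getD_eq_getElem?_getD]

theorem head_take_eq_getD (h : l.take a ≠ []) : (l.take a).head h = l.getD 0 d := by
  rw [head_take, head_eq_getElem, getD_eq_getElem]

theorem head_drop_eq_getD (h : l.drop a ≠ []) : (l.drop a).head h = l.getD a d := by
  rw [head_drop, getD_eq_getElem]

theorem getLast_take_eq_getD (h : l.take a ≠ []) (ha : a ≤ l.length) :
    (l.take a).getLast h = l.getD (a - 1) d := by
  have := length_pos_of_ne_nil h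
  rw [length_take] at this
  rw [getLast_eq_getElem, getElem_take, getD_eq_getElem _ _ (by omega)]
  simp only [length_take, min_eq_left ha]

theorem take_append_take_drop_append_drop {b : ℕ} (hab : a ≤ b) :
    l.take a ++ (l.drop a).take (b - a) ++ l.drop b = l := by
  rw [show l.drop b = (l.drop a).drop (b - a) by rw [drop_drop, Nat.add_sub_cancel' hab],
    append_assoc, take_append_drop, take_append_drop]

theorem range_add_two (n : ℕ) : range (n + 2) = 0 :: range' 1 (n + 1) := by
  rw [range_eq_range', show n + 2 = (n + 1) + 1 by rfl, range'_succ]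

theorem eq_range'_of_getD {l : List ℕ} {s k : ℕ} (hl : l.length = k)
    (h : ∀ i < k, l.getD i 0 = s + i) : l = range' s k := by
  refine ext_getElem (by simp [hl]) fun i h₁ _ => ?_
  rw [getElem_range', ← getD_eq_getElem _ 0, h i (by omega), Nat.one_mul]

end List

def brk (a b : ℕ) : ℕ := if a + 1 = b ∨ b + 1 = a then 0 else 1

theorem brk_eq_zero_iff {a b : ℕ} : brk a b = 0 ↔ a + 1 = b ∨ b + 1 = a := by
  unfold brk; split_ifs <;> simp_all

theorem brk_eq_one_iff {a b : ℕ} : brk a b = 1 ↔ a + 1 ≠ b ∧ b + 1 ≠ a := by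
  unfold brk; split_ifs <;> simp only [ne_eq, true_iff, false_iff] <;> omega

theorem brk_le_one (a b : ℕ) : brk a b ≤ 1 := by
  unfold brk; split_ifs <;> simp

theorem brk_comm (a b : ℕ) : brk a b = brk b a := by
  simp only [brk, or_comm]

@[simp] theorem bp'_singleton (a : ℕ) : bp' [a] = 0 := rfl

theorem bp'_cons_cons (a b : ℕ) (l : List ℕ) : bp' (a :: b :: l) = brk a b + bp' (b :: l) := by
  simp only [bp', List.drop_one, List.tail_cons, List.zip_cons_cons, List.countP_cons, brk]
  split_ifs <;> simp_all [Nat.add_comm]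

theorem bp'_append {u v : List ℕ} (hu : u ≠ []) (hv : v ≠ []) :
    bp' (u ++ v) = bp' u + brk (u.getLast hu) (v.head hv) + bp' v := by
  obtain ⟨b, v, rfl⟩ := List.exists_cons_of_ne_nil hv
  induction u with
  | nil => contradiction
  | cons a u ih =>
    cases u with
    | nil => simp [bp'_cons_cons]
    | cons c u =>
      rw [List.cons_append, List.cons_append, bp'_cons_cons, ← List.cons_append,
        ih (List.cons_ne_nil _ _), bp'_cons_cons, List.getLast_cons_cons]
      ring

theorem bp'_reverse (l : List ℕ) : bp' l.reverse = bp' l := by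
  induction l with
  | nil => rfl
  | cons a l ih =>
    cases l with
    | nil => rfl
    | cons b l =>
      rw [List.reverse_cons, bp'_append (by simp) (by simp), ih, bp'_cons_cons]
      simp [brk_comm, Nat.add_comm]

theorem bp'_reverse_append {u v : List ℕ} (hu : u ≠ []) (hv : v ≠ []) :
    bp' (u.reverse ++ v) + brk (u.getLast hu) (v.head hv)
      = bp' (u ++ v) + brk (u.head hu) (v.head hv) := by
  rw [bp'_append (List.reverse_ne_nil_iff.mpr hu) hv, bp'_append hu hv, bp'_reverse,
    List.getLast_reverse]
  ring

theorem bp'_swap_append {u v w : List ℕ} (hu : u ≠ []) (hv : v ≠ []) (hw : w ≠ []) :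
    bp' (v ++ u ++ w) + brk (u.getLast hu) (v.head hv) + brk (v.getLast hv) (w.head hw)
      = bp' (u ++ v ++ w) + brk (v.getLast hv) (u.head hu) + brk (u.getLast hu) (w.head hw) := by
  rw [bp'_append (List.append_ne_nil_of_left_ne_nil hv _) hw, bp'_append hv hu,
    bp'_append (List.append_ne_nil_of_left_ne_nil hu _) hw, bp'_append hu hv,
    List.getLast_append_right hu, List.getLast_append_right hv]
  ring

theorem bp'_range' (s k : ℕ) : bp' (List.range' s k) = 0 := by
  induction k generalizing s with
  | zero => rfl
  | succ k ih =>
    cases k with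
    | zero => rfl
    | succ k =>
      rw [List.range'_succ, List.range'_succ, bp'_cons_cons, ← List.range'_succ, ih,
        brk_eq_zero_iff.mpr (Or.inl rfl)]

def reversePrefix (a : ℕ) (l : List ℕ) : List ℕ := (l.take a).reverse ++ l.drop a

def transposePrefix (a b : ℕ) (l : List ℕ) : List ℕ :=
  (l.drop a).take (b - a) ++ l.take a ++ l.drop b

theorem bp'_reversePrefix_add {l : List ℕ} {a : ℕ} (h₀ : 0 < a) (h : a < l.length) :
    bp' (reversePrefix a l) + brk (l.getD (a - 1) 0) (l.getD a 0)
      = bp' l + brk (l.getD 0 0) (l.getD a 0) := by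
  have hu : l.take a ≠ [] := List.ne_nil_of_length_pos (by simp; omega)
  have hv : l.drop a ≠ [] := List.ne_nil_of_length_pos (by simp; omega)
  have := bp'_reverse_append hu hv
  rwa [List.take_append_drop, List.getLast_take_eq_getD _ h.le, List.head_take_eq_getD,
    List.head_drop_eq_getD] at this

theorem bp'_transposePrefix_add {l : List ℕ} {a b : ℕ} (h₀ : 0 < a) (hab : a < b)
    (h : b < l.length) :
    bp' (transposePrefix a b l) + brk (l.getD (a - 1) 0) (l.getD a 0)
        + brk (l.getD (b - 1) 0) (l.getD b 0)
      = bp' l + brk (l.getD (b - 1) 0) (l.getD 0 0) + brk (l.getD (a - 1) 0) (l.getD b 0) := by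
  have hu : l.take a ≠ [] := List.ne_nil_of_length_pos (by simp; omega)
  have hv : (l.drop a).take (b - a) ≠ [] := List.ne_nil_of_length_pos (by simp; omega)
  have hw : l.drop b ≠ [] := List.ne_nil_of_length_pos (by simp; omega)
  have := bp'_swap_append hu hv hw
  unfold transposePrefix
  rwa [List.take_append_take_drop_append_drop hab.le, List.getLast_take_eq_getD _ (by omega),
    List.head_take_eq_getD, List.head_drop_eq_getD, List.head_take_eq_getD, List.getD_drop,
    List.getLast_take_eq_getD _ (by simp; omega), List.getD_drop, Nat.add_zero,
    show a + (b - a - 1) = b - 1 by omega] at this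

theorem getD_reversePrefix_of_lt {l : List ℕ} {a i : ℕ} (hi : i < a) (h : a ≤ l.length) :
    (reversePrefix a l).getD i 0 = l.getD (a - 1 - i) 0 := by
  rw [reversePrefix, List.getD_append _ _ _ _ (by simp; omega),
    List.getD_reverse _ (by simp; omega), List.getD_take (by simp; omega)]
  simp [min_eq_left h]

theorem getD_reversePrefix_of_le {l : List ℕ} {a i : ℕ} (hi : a ≤ i) (h : a ≤ l.length) :
    (reversePrefix a l).getD i 0 = l.getD i 0 := by
  rw [reversePrefix, List.getD_append_right _ _ _ _ (by simp; omega), List.getD_drop]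
  simp only [List.length_reverse, List.length_take, min_eq_left h, Nat.add_sub_cancel' hi]

theorem getD_transposePrefix_of_le {l : List ℕ} {a b i : ℕ} (hab : a ≤ b) (hi : b ≤ i)
    (h : b ≤ l.length) : (transposePrefix a b l).getD i 0 = l.getD i 0 := by
  rw [transposePrefix, List.getD_append_right _ _ _ _ (by simp; omega), List.getD_drop]
  simp only [List.length_append, List.length_take, List.length_drop]
  congr 1; omega

theorem reversePrefix_perm (a : ℕ) (l : List ℕ) : (reversePrefix a l).Perm l := by
  simpa [reversePrefix] using (List.reverse_perm (l.take a)).append_right (l.drop a)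

theorem transposePrefix_perm {a b : ℕ} (hab : a ≤ b) (l : List ℕ) :
    (transposePrefix a b l).Perm l := by
  conv_rhs => rw [← List.take_append_take_drop_append_drop (l := l) hab]
  exact List.perm_append_comm.append_right _

theorem brk_le_bp' {l : List ℕ} {a : ℕ} (h₀ : 0 < a) (h : a < l.length) :
    brk (l.getD (a - 1) 0) (l.getD a 0) ≤ bp' l := by
  have hu : l.take a ≠ [] := List.ne_nil_of_length_pos (by simp; omega)
  have hv : l.drop a ≠ [] := List.ne_nil_of_length_pos (by simp; omega)
  have := bp'_append hu hv
  rw [List.take_append_drop, List.getLast_take_eq_getD (d := 0) _ h.le,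
    List.head_drop_eq_getD (d := 0)] at this
  omega

theorem getD_eq_add_or_add_eq_of_brk_eq_zero {l : List ℕ} (hl : l.Nodup) {k : ℕ}
    (hk : k < l.length) (hb : ∀ i, 0 < i → i ≤ k → brk (l.getD (i - 1) 0) (l.getD i 0) = 0) :
    (∀ i ≤ k, l.getD i 0 = l.getD 0 0 + i) ∨ (∀ i ≤ k, l.getD i 0 + i = l.getD 0 0) := by
  induction k with
  | zero => exact Or.inl fun i hi => by simp [Nat.le_zero.mp hi]
  | succ k ih =>
    have hstep := brk_eq_zero_iff.mp (hb (k + 1) (by omega) le_rfl)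
    rw [Nat.add_sub_cancel] at hstep
    rcases Nat.eq_zero_or_pos k with rfl | hk₀
    · rw [Nat.zero_add] at hstep
      refine hstep.imp (fun h i hi => ?_) (fun h i hi => ?_) <;> interval_cases i <;> omega
    · have hne : l.getD (k + 1) 0 ≠ l.getD (k - 1) 0 := fun he =>
        absurd ((List.getD_inj hk (by omega) hl).mp he) (by omega)
      refine (ih (by omega) fun i h₀ hi => hb i h₀ (by omega)).imp
        (fun h i hi => ?_) (fun h i hi => ?_) <;>
      · rcases Nat.lt_or_eq_of_le hi with hi | rfl
        · exact h i (by omega)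
        · have := h k le_rfl; have := h (k - 1) (by omega); omega

theorem exists_brk_eq_one_of_brk_eq_zero {l : List ℕ} (hl : l.Nodup) {p : ℕ} (hp : 2 ≤ p)
    (hpl : p < l.length) (hadj : brk (l.getD 0 0) (l.getD p 0) = 0) :
    ∃ a, 0 < a ∧ a ≤ p ∧ brk (l.getD (a - 1) 0) (l.getD a 0) = 1 := by
  by_contra! h
  have := brk_eq_zero_iff.mp hadj
  rcases getD_eq_add_or_add_eq_of_brk_eq_zero hl hpl fun i h₀ hi => by
      have := brk_le_one (l.getD (i - 1) 0) (l.getD i 0); have := h i h₀ hi; omega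
    with h' | h' <;> have := h' p le_rfl <;> omega

namespace IsPerm

variable {n : ℕ} {t : List ℕ}

theorem iff_tail : IsPerm n (0 :: t) ↔ t.Perm (List.range' 1 (n + 1)) ∧ t.getD n 0 = n + 1 := by
  simp [IsPerm, List.range_add_two, List.perm_cons]

theorem length_tail (h : IsPerm n (0 :: t)) : t.length = n + 1 := by
  simpa using (iff_tail.mp h).1.length_eq

theorem nodup_tail (h : IsPerm n (0 :: t)) : t.Nodup :=
  (iff_tail.mp h).1.nodup_iff.mpr List.nodup_range'

theorem getD_tail_self (h : IsPerm n (0 :: t)) : t.getD n 0 = n + 1 :=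
  (iff_tail.mp h).2

theorem mem_tail_iff (h : IsPerm n (0 :: t)) {v : ℕ} : v ∈ t ↔ 1 ≤ v ∧ v ≤ n + 1 := by
  rw [(iff_tail.mp h).1.mem_iff, List.mem_range'_1]; omega

theorem getD_tail_mem (h : IsPerm n (0 :: t)) {i : ℕ} (hi : i ≤ n) :
    1 ≤ t.getD i 0 ∧ t.getD i 0 ≤ n + 1 := by
  rw [← h.mem_tail_iff, List.getD_eq_getElem _ _ (by rw [h.length_tail]; omega)]
  exact List.getElem_mem _

theorem getD_tail_ne (h : IsPerm n (0 :: t)) {i j : ℕ} (hi : i ≤ n) (hj : j ≤ n) (hij : i ≠ j) :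
    t.getD i 0 ≠ t.getD j 0 :=
  (List.getD_inj (by rw [h.length_tail]; omega) (by rw [h.length_tail]; omega) h.nodup_tail).not.mpr
    hij

theorem exists_getD_tail_eq (h : IsPerm n (0 :: t)) {v : ℕ} (h₁ : 1 ≤ v) (h₂ : v ≤ n + 1) :
    ∃ i ≤ n, t.getD i 0 = v := by
  obtain ⟨i, hi, rfl⟩ := List.getElem_of_mem (h.mem_tail_iff.mpr ⟨h₁, h₂⟩)
  exact ⟨i, by rw [h.length_tail] at hi; omega, List.getD_eq_getElem _ _ hi⟩

theorem of_perm (h : IsPerm n (0 :: t)) {t' : List ℕ} (hp : t'.Perm t)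
    (hn : t'.getD n 0 = t.getD n 0) : IsPerm n (0 :: t') :=
  iff_tail.mpr ⟨hp.trans (iff_tail.mp h).1, hn.trans h.getD_tail_self⟩

theorem reversePrefix (h : IsPerm n (0 :: t)) {a : ℕ} (ha : a ≤ n) :
    IsPerm n (0 :: reversePrefix a t) :=
  h.of_perm (reversePrefix_perm a t) (getD_reversePrefix_of_le ha (by rw [h.length_tail]; omega))

theorem transposePrefix (h : IsPerm n (0 :: t)) {a b : ℕ} (hab : a ≤ b) (hb : b ≤ n) :
    IsPerm n (0 :: transposePrefix a b t) :=
  h.of_perm (transposePrefix_perm hab t)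
    (getD_transposePrefix_of_le hab hb (by rw [h.length_tail]; omega))

theorem tail_eq_range'_of_bp'_eq_zero (h : IsPerm n (0 :: t)) (hb : bp' t = 0) :
    t = List.range' 1 (n + 1) := by
  have hl := h.length_tail
  have hn := h.getD_tail_self
  have h₀ := h.getD_tail_mem (Nat.zero_le n)
  refine List.eq_range'_of_getD hl fun i hi => ?_
  rcases getD_eq_add_or_add_eq_of_brk_eq_zero h.nodup_tail (k := n) (by omega)
    fun i h₀ hi => by have := brk_le_bp' (l := t) h₀ (by omega); omega
  with h' | h' <;> have := h' i (by omega) <;> have := h' n le_rfl <;> omega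

end IsPerm

theorem applySeq_append (π : List ℕ) (ops ops' : List PrefOp) :
    applySeq π (ops ++ ops') = applySeq (applySeq π ops) ops' := by
  induction ops generalizing π with
  | nil => rfl
  | cons o ops ih => exact ih _

def RTReach (n : ℕ) (t : List ℕ) (k : ℕ) (t' : List ℕ) : Prop :=
  ∃ ops : List PrefOp, ops.length = k ∧ ValidSeq n ops ∧ (∀ o ∈ ops, o.isTransrev = false) ∧
    applySeq (0 :: t) ops = 0 :: t'

namespace RTReach

variable {n k k' : ℕ} {t t' t'' : List ℕ}

theorem refl (n : ℕ) (t : List ℕ) : RTReach n t 0 t :=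
  ⟨[], rfl, by simp [ValidSeq], by simp, rfl⟩

theorem trans (h : RTReach n t k t') (h' : RTReach n t' k' t'') : RTReach n t (k + k') t'' := by
  obtain ⟨ops, rfl, hv, hr, ha⟩ := h
  obtain ⟨ops', rfl, hv', hr', ha'⟩ := h'
  refine ⟨ops ++ ops', List.length_append, fun o ho => ?_, fun o ho => ?_, ?_⟩
  · rcases List.mem_append.mp ho with ho | ho
    exacts [hv o ho, hv' o ho]
  · rcases List.mem_append.mp ho with ho | ho
    exacts [hr o ho, hr' o ho]
  · rw [applySeq_append, ha, ha']

theorem reversePrefix {a : ℕ} (ha : 2 ≤ a) (hn : a ≤ n) : RTReach n t 1 (reversePrefix a t) := by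
  refine ⟨[.rev (a + 1)], rfl, by simpa [ValidSeq, PrefOp.Valid] using ⟨by omega, by omega⟩,
    by simp [PrefOp.isTransrev], ?_⟩
  simp [applySeq, PrefOp.apply, prefixReversal, _root_.reversePrefix]

theorem transposePrefix {a b : ℕ} (ha : 1 ≤ a) (hab : a < b) (hb : b ≤ n) :
    RTReach n t 1 (transposePrefix a b t) := by
  refine ⟨[.trans (a + 1) (b + 1)], rfl,
    by simpa [ValidSeq, PrefOp.Valid] using ⟨by omega, by omega, by omega⟩,
    by simp [PrefOp.isTransrev], ?_⟩
  simp [applySeq, PrefOp.apply, prefixTransposition, _root_.transposePrefix]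

end RTReach

section Steps

variable {n : ℕ} {t : List ℕ}

theorem exists_step_of_head_adjacent (h : IsPerm n (0 :: t)) {p : ℕ} (hp : 2 ≤ p) (hpn : p ≤ n)
    (hadj : brk (t.getD 0 0) (t.getD p 0) = 0) :
    ∃ t', IsPerm n (0 :: t') ∧ RTReach n t 1 t' ∧ bp' t' < bp' t := by
  have hl := h.length_tail
  by_cases hcut : brk (t.getD (p - 1) 0) (t.getD p 0) = 1
  · refine ⟨_, h.reversePrefix hpn, .reversePrefix hp hpn, ?_⟩
    have := bp'_reversePrefix_add (l := t) (a := p) (by omega) (by omega)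
    omega
  -- `t[0]` and `t[p - 1]` are the two neighbours of `t[p]`, so `t[p + 1]` is not one
  have hprev : t.getD (p - 1) 0 + 1 = t.getD p 0 ∨ t.getD p 0 + 1 = t.getD (p - 1) 0 :=
    brk_eq_zero_iff.mp (by have := brk_le_one (t.getD (p - 1) 0) (t.getD p 0); omega)
  have hjoin := brk_eq_zero_iff.mp hadj
  have h0 := h.getD_tail_ne (Nat.zero_le n) (show p - 1 ≤ n by omega) (by omega)
  have hpn' : p < n := by
    by_contra! hpn'
    have := h.getD_tail_mem (Nat.zero_le n)
    have := h.getD_tail_mem (show p - 1 ≤ n by omega)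
    have := h.getD_tail_self
    obtain rfl : p = n := by omega
    omega
  have hnext : brk (t.getD p 0) (t.getD (p + 1) 0) = 1 := by
    have := h.getD_tail_ne (show p + 1 ≤ n by omega) (Nat.zero_le n) (by omega)
    have := h.getD_tail_ne (show p + 1 ≤ n by omega) (show p - 1 ≤ n by omega) (by omega)
    rw [brk_eq_one_iff]; omega
  obtain ⟨a, ha₀, hap, ha⟩ := exists_brk_eq_one_of_brk_eq_zero h.nodup_tail hp (by omega) hadj
  refine ⟨transposePrefix a (p + 1) t, h.transposePrefix (by omega) hpn',
    .transposePrefix ha₀ (by omega) hpn', ?_⟩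
  have key := bp'_transposePrefix_add (l := t) ha₀ (show a < p + 1 by omega) (by omega)
  rw [Nat.add_sub_cancel, brk_comm (t.getD p 0) (t.getD 0 0)] at key
  have := brk_le_one (t.getD (a - 1) 0) (t.getD (p + 1) 0)
  omega

theorem exists_step_of_two_le_head (h : IsPerm n (0 :: t)) (hx : 2 ≤ t.getD 0 0) :
    ∃ t', IsPerm n (0 :: t') ∧ RTReach n t 1 t' ∧ bp' t' < bp' t := by
  have hxn := (h.getD_tail_mem (Nat.zero_le n)).2
  have hn : n ≠ 0 := by rintro rfl; have := h.getD_tail_self; omega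
  obtain ⟨y, hy₁, hyn, hxy, hy⟩ :
      ∃ y, 1 ≤ y ∧ y ≤ n + 1 ∧ brk (t.getD 0 0) y = 0 ∧ y ≠ t.getD 1 0 := by
    by_cases h₁ : t.getD 1 0 = t.getD 0 0 - 1
    · have := h.getD_tail_self
      have := h.getD_tail_ne (Nat.zero_le n) le_rfl (Ne.symm hn)
      exact ⟨t.getD 0 0 + 1, by omega, by omega, brk_eq_zero_iff.mpr (.inl rfl), by omega⟩
    · exact ⟨t.getD 0 0 - 1, by omega, by omega, brk_eq_zero_iff.mpr (.inr (by omega)),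
        Ne.symm h₁⟩
  obtain ⟨p, hpn, rfl⟩ := h.exists_getD_tail_eq hy₁ hyn
  have hp₀ : p ≠ 0 := by rintro rfl; simp [brk] at hxy
  have hp₁ : p ≠ 1 := by rintro rfl; exact hy rfl
  exact exists_step_of_head_adjacent h (by omega) hpn hxy

theorem exists_three_steps_of_head_eq_one (h : IsPerm n (0 :: t)) {m r : ℕ} (hm : 0 < m)
    (hpre : ∀ i < m, t.getD i 0 = i + 1) (hmm : m + 2 ≤ t.getD m 0) (hmr : m < r) (hrn : r < n)
    (hr : t.getD r 0 = m + 1) (hr₁ : t.getD (r - 1) 0 = m + 2) :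
    ∃ t', IsPerm n (0 :: t') ∧ RTReach n t 3 t' ∧ bp' t' + 2 ≤ bp' t := by
  have hl := h.length_tail
  have hm₁ := hpre (m - 1) (by omega)
  rw [Nat.sub_add_cancel hm] at hm₁
  have h₀ := hpre 0 hm
  have hcut : brk (t.getD r 0) (t.getD (r + 1) 0) = 1 := by
    have := h.getD_tail_ne (show r + 1 ≤ n by omega) (show r - 1 ≤ n by omega) (by omega)
    have := h.getD_tail_ne (show r + 1 ≤ n by omega) (show m - 1 ≤ n by omega) (by omega)
    rw [brk_eq_one_iff]; omega
  -- the first reversal keeps the breakpoint count and brings `m + 1` to the front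
  set t₁ := reversePrefix (r + 1) t with ht₁
  have hb₁ := bp'_reversePrefix_add (l := t) (a := r + 1) (by omega) (by omega)
  rw [Nat.add_sub_cancel, ← ht₁, hcut] at hb₁
  have := brk_le_one (t.getD 0 0) (t.getD (r + 1) 0)
  set p := r + 1 - m with hp
  have ht₁_head : t₁.getD 0 0 = m + 1 := by
    rw [ht₁, getD_reversePrefix_of_lt (by omega) (by omega)]; simpa using hr
  have ht₁_pred : t₁.getD (p - 1) 0 = t.getD m 0 := by
    rw [ht₁, getD_reversePrefix_of_lt (by omega) (by omega)]; congr 1; omega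
  have ht₁_at : t₁.getD p 0 = m := by
    rw [ht₁, getD_reversePrefix_of_lt (by omega) (by omega), ← hm₁]; congr 1; omega
  -- the second reversal joins `m + 1` to `m` and brings `t[m] ≥ 2` to the front
  set t₂ := reversePrefix p t₁ with ht₂
  have hb₂ := bp'_reversePrefix_add (l := t₁) (a := p) (by omega)
    (by rw [ht₁, reversePrefix, List.length_append]; simp; omega)
  rw [← ht₂, ht₁_head, ht₁_pred, ht₁_at, brk_eq_one_iff.mpr ⟨by omega, by omega⟩,
    brk_eq_zero_iff.mpr (.inr rfl)] at hb₂
  have hx₂ : 2 ≤ t₂.getD 0 0 := by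
    rw [ht₂, getD_reversePrefix_of_lt (by omega) (by simp [ht₁, reversePrefix]; omega),
      Nat.sub_zero, ht₁_pred]
    omega
  have h₂ : IsPerm n (0 :: t₂) :=
    (h.reversePrefix (by omega : r + 1 ≤ n)).reversePrefix (show p ≤ n by omega)
  obtain ⟨t₃, h₃, hr₃, hb₃⟩ := exists_step_of_two_le_head h₂ hx₂
  exact ⟨t₃, h₃, ((RTReach.reversePrefix (by omega) (by omega)).trans
    (.reversePrefix (by omega) (by omega))).trans hr₃, by omega⟩

theorem exists_steps_of_head_eq_one (h : IsPerm n (0 :: t)) (hx : t.getD 0 0 = 1)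
    (hb : bp' t ≠ 0) :
    (∃ t', IsPerm n (0 :: t') ∧ RTReach n t 1 t' ∧ bp' t' < bp' t) ∨
      (∃ t', IsPerm n (0 :: t') ∧ RTReach n t 3 t' ∧ bp' t' + 2 ≤ bp' t) := by
  have hl := h.length_tail
  have hn := h.getD_tail_self
  have hwit : ∃ i, t.getD i 0 ≠ i + 1 :=
    ⟨n + 1, by rw [List.getD_eq_default _ _ (by omega)]; omega⟩
  set m := Nat.find hwit
  have hm : t.getD m 0 ≠ m + 1 := Nat.find_spec hwit
  have hpre : ∀ i < m, t.getD i 0 = i + 1 := fun i hi => not_not.mp (Nat.find_min hwit hi)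
  have hm₀ : 0 < m := Nat.pos_of_ne_zero fun h₀ => hm (by rw [h₀, hx])
  have hmn : m < n := by
    by_contra! hmn
    refine hb ((List.eq_range'_of_getD hl fun i hi => ?_) ▸ bp'_range' 1 (n + 1))
    rcases Nat.lt_or_ge i m with him | him
    · rw [hpre i him, Nat.add_comm]
    · rw [show i = n by omega, hn, Nat.add_comm]
  have hmm : m + 2 ≤ t.getD m 0 := by
    have := (h.getD_tail_mem hmn.le).1
    by_contra! hlt
    have := hpre (t.getD m 0 - 1) (by omega)
    exact h.getD_tail_ne (show t.getD m 0 - 1 ≤ n by omega) hmn.le (by omega) (by omega)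
  obtain ⟨r, hrn, hr⟩ := h.exists_getD_tail_eq (v := m + 1) (by omega) (by omega)
  have hmr : m < r := by
    by_contra! hrm
    rcases hrm.lt_or_eq with hrm | rfl
    · have := hpre r hrm
      exact h.getD_tail_ne hrn hmn.le (by omega) (by omega)
    · exact hm hr
  have hrn' : r < n := by
    rcases hrn.lt_or_eq with hrn | rfl
    · exact hrn
    · omega
  have hm₁ := hpre (m - 1) (by omega)
  rw [Nat.sub_add_cancel hm₀] at hm₁
  by_cases hr₁ : t.getD (r - 1) 0 = m + 2
  · exact .inr (exists_three_steps_of_head_eq_one h hm₀ hpre hmm hmr hrn' hr hr₁)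
  · refine .inl ⟨_, h.transposePrefix hmr.le hrn'.le, .transposePrefix hm₀ hmr hrn'.le, ?_⟩
    have key := bp'_transposePrefix_add (l := t) hm₀ hmr (by omega)
    have := h.getD_tail_ne (show r - 1 ≤ n by omega) (show m - 1 ≤ n by omega) (by omega)
    rw [hm₁, hr, brk_eq_zero_iff.mpr (.inl rfl), brk_eq_one_iff.mpr ⟨by omega, by omega⟩,
      brk_eq_one_iff.mpr ⟨by omega, by omega⟩] at key
    have := brk_le_one (t.getD (r - 1) 0) (t.getD 0 0)
    omega

end Steps

theorem exists_rtReach_range' {n : ℕ} {t : List ℕ} (h : IsPerm n (0 :: t)) :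
    ∃ k, RTReach n t k (List.range' 1 (n + 1)) ∧ k ≤ 3 * bp' t / 2 := by
  induction hb : bp' t using Nat.strong_induction_on generalizing t with
  | _ b ih =>
    by_cases hb₀ : b = 0
    · exact ⟨0, h.tail_eq_range'_of_bp'_eq_zero (hb ▸ hb₀) ▸ RTReach.refl n t, by omega⟩
    obtain ⟨t', k, h', hr, hlt, hk⟩ : ∃ t' k, IsPerm n (0 :: t') ∧ RTReach n t k t' ∧
        bp' t' < b ∧ k + 3 * bp' t' / 2 ≤ 3 * b / 2 := by
      rcases (h.getD_tail_mem (Nat.zero_le n)).1.eq_or_lt with hx | hx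
      · rcases exists_steps_of_head_eq_one h hx.symm (hb ▸ hb₀) with
          ⟨t', h', hr, hlt⟩ | ⟨t', h', hr, hle⟩
        · exact ⟨t', 1, h', hr, by omega, by omega⟩
        · exact ⟨t', 3, h', hr, by omega, by omega⟩
      · obtain ⟨t', h', hr, hlt⟩ := exists_step_of_two_le_head h hx
        exact ⟨t', 1, h', hr, by omega, by omega⟩
    obtain ⟨k', hr', hk'⟩ := ih _ hlt h' rfl
    exact ⟨k + k', hr.trans hr', by omega⟩

/-- every permutation can be sorted by at most `⌊3(b(π)−1)/2⌋`
prefix reversals and prefix transpositions. -/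
theorem sortRT_upper_bound
    (n : ℕ) (π : List ℕ) (hπ : IsPerm n π) :
    ∃ ops : List PrefOp, ValidSeq n ops ∧
      (∀ o ∈ ops, o.isTransrev = false) ∧
      applySeq π ops = List.range (n + 2) ∧
      ops.length ≤ 3 * (bp π - 1) / 2 := by
  obtain ⟨t, rfl⟩ : ∃ t, π = 0 :: t := by
    obtain ⟨hp, h₀, -⟩ := hπ
    obtain ⟨a, t, rfl⟩ := List.exists_cons_of_ne_nil (l := π)
      (List.ne_nil_of_length_pos (by simp [hp.length_eq]))
    exact ⟨t, by rw [show a = 0 from h₀]⟩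
  obtain ⟨k, ⟨ops, rfl, hv, hr, ha⟩, hk⟩ := exists_rtReach_range' hπ
  rw [show bp (0 :: t) = 1 + bp' t from rfl, Nat.add_sub_cancel_left]
  exact ⟨ops, hv, hr, by rw [ha, List.range_add_two], hk⟩
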